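/- Let T be a rooted phylogenetic X-tree whose positive edge lengths satisfy the ultrametric condition, and let A ⊆ X with |A| = k. Then A is a size-k maxPD set if and only if A contains at least one leaf from each connected component of the forest T[R(d_{k⁻})] and at most one leaf from each connected component of the forest T[R(d_{k⁺})]. -/

import Mathlib

/-!
Rooted phylogenetic `X`-trees with positive edge lengths.

A tree on a finite vertex type `V` is encoded by its parent function: the root
has no parent, every other vertex has one, and iterating the parent function
reaches the root.  The edge into a non-root vertex `v` has length `len v`, and
`hgt v` is the distance from the root to `v`.  Leaves are the vertices with no
children; the taxon set `X` of the paper is the set `leaves` of leaves.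
Every non-leaf, non-root vertex has out-degree (number of children) at least 2.
-/

noncomputable section

attribute [local instance] Classical.propDecidable

structure PhyloTree (V : Type) [Fintype V] [DecidableEq V] where
  root : V
  parent : V → Option V
  len : V → ℝ
  hgt : V → ℝ
  parent_root : parent root = none
  parent_isSome : ∀ v, v ≠ root → (parent v).isSome
  reaches_root : ∀ v, Relation.ReflTransGen (fun a b => parent a = some b) v root
  hgt_root : hgt root = 0
  hgt_eq : ∀ v u, parent v = some u → hgt v = hgt u + len v
  len_pos : ∀ v, v ≠ root → 0 < len v
  outdeg_ge_two : ∀ v, v ≠ root → (∃ u, parent u = some v) →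
    2 ≤ Set.ncard {u | parent u = some v}

namespace PhyloTree

variable {V : Type} [Fintype V] [DecidableEq V]

/-- `T.step a b` : `b` is the parent of `a`. -/
def step (T : PhyloTree V) (a b : V) : Prop := T.parent a = some b

/-- `T.anc u v` : `u` is an ancestor of `v`, i.e. `u` lies on the (unique) path
from the root to `v` (reflexively). -/
def anc (T : PhyloTree V) (u v : V) : Prop := Relation.ReflTransGen T.step v u

/-- a leaf is a vertex with no children. -/
def IsLeaf (T : PhyloTree V) (v : V) : Prop := ∀ u, T.parent u ≠ some v

/-- the leaf set (the taxon set `X`). -/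
def leaves (T : PhyloTree V) : Set V := {v | T.IsLeaf v}

/-- Phylogenetic diversity of a set `Y`: the total length of all edges `e`
whose set of descendant leaves meets `Y` (the edge into a non-root vertex `v`
has length `T.len v`). -/
def PD (T : PhyloTree V) (Y : Set V) : ℝ :=
  ∑ v : V, if v ≠ T.root ∧ ∃ x ∈ Y, T.IsLeaf x ∧ T.anc v x then T.len v else 0

/-- the ultrametric condition: all leaves are at the same distance from the root. -/
def Ultrametric (T : PhyloTree V) : Prop :=
  ∀ x y, T.IsLeaf x → T.IsLeaf y → T.hgt x = T.hgt y

/-- `R d`: the set of vertices within distance `d` above some leaf. -/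
def R (T : PhyloTree V) (d : ℝ) : Set V :=
  {v | ∃ x, T.IsLeaf x ∧ T.anc v x ∧ T.hgt x - T.hgt v ≤ d}

/-- adjacency in the forest induced by `T` on a vertex set `S`. -/
def adjIn (T : PhyloTree V) (S : Set V) (u v : V) : Prop :=
  u ∈ S ∧ v ∈ S ∧ (T.parent u = some v ∨ T.parent v = some u)

/-- the connected components of the forest induced by `T` on `S`. -/
def components (T : PhyloTree V) (S : Set V) : Set (Set V) :=
  {C | ∃ v ∈ S, C = S ∩ {u | Relation.ReflTransGen (T.adjIn S) v u}}

/-- `c d`: the number of connected components of the forest `T[R(d)]`. -/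
def ccount (T : PhyloTree V) (d : ℝ) : ℕ := (T.components (T.R d)).ncard

/-- `k` is a branching value if `T[R(d)]` has exactly `k` components for some `d ≥ 0`. -/
def IsBranchingValue (T : PhyloTree V) (k : ℕ) : Prop := ∃ d : ℝ, 0 ≤ d ∧ T.ccount d = k

/-- the branching distance `d_k = min {d : c(d) = k}`. -/
def branchDist (T : PhyloTree V) (k : ℕ) : ℝ := sInf {d | 0 ≤ d ∧ T.ccount d = k}

/-- `k⁻`: the largest branching value `≤ k`. -/
def kminus (T : PhyloTree V) (k : ℕ) : ℕ := sSup {j | j ≤ k ∧ T.IsBranchingValue j}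

/-- `k⁺`: the smallest branching value `≥ k`. -/
def kplus (T : PhyloTree V) (k : ℕ) : ℕ := sInf {j | k ≤ j ∧ T.IsBranchingValue j}

/-- `A` is a size-`k` maxPD set. -/
def IsMaxPD (T : PhyloTree V) (k : ℕ) (A : Set V) : Prop :=
  A ⊆ T.leaves ∧ A.ncard = k ∧ ∀ Y ⊆ T.leaves, Y.ncard = k → T.PD Y ≤ T.PD A

/-- `A` is a size-`k` minPD set. -/
def IsMinPD (T : PhyloTree V) (k : ℕ) (A : Set V) : Prop :=
  A ⊆ T.leaves ∧ A.ncard = k ∧ ∀ Y ⊆ T.leaves, Y.ncard = k → T.PD A ≤ T.PD Y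

/-- `m T k`: the number of size-`k` maxPD sets of `T`. -/
def m (T : PhyloTree V) (k : ℕ) : ℕ := {A : Set V | T.IsMaxPD k A}.ncard

/-- `T` is binary: every non-leaf vertex has exactly two children. -/
def Binary (T : PhyloTree V) : Prop :=
  ∀ v, ¬ T.IsLeaf v → Set.ncard {u | T.parent u = some v} = 2

end PhyloTree

/-!
Let all leaves have height `H`. Then `v ∈ R t` iff `H - hgt v ≤ t`, and the components of
`T[R t]` are the subtrees below their roots. Cutting every edge at the depths `H - hgt v` of
the vertices writes `PD Y` as `∑ (t' - t) · g_Y(t)` over consecutive depths `t < t' ≤ H`, where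
`g_Y(t)` is the number of components of `T[R t]` meeting `Y`; the edge into `v` contributes to
layer `t` exactly when `v` is the root of such a component.

Trivially `g_Y(t) ≤ min(|Y|, c(t))`. If `A` meets every component at `d_{k⁻}`, it meets every
component at all `t ≥ d_{k⁻}`, where `c(t) ≤ k`. For `t < d_{k⁻}` one has `c(t) > k`; if `A`
has at most one leaf per component at `d_{k⁺}`, the same holds for `t ≤ d_{k⁺}`, and also on
`[d_{k⁺}, d_{k⁻})`, where `c` is constant. So such an `A` attains the bound in every layer, and
such sets exist. A set violating either condition falls short of the bound in the layer starting
at `d_{k⁻}` or at `d_{k⁺}`, both of which are depths below `H`, so its `PD` is strictly smaller.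
-/

section Telescoping

variable {α : Type*} [LinearOrder α]

/-- The least element of `L` above `t`, and `t` itself if there is none. -/
def nextAbove (L : Finset α) (t : α) : α :=
  if h : (L.filter (t < ·)).Nonempty then (L.filter (t < ·)).min' h else t

lemma nextAbove_spec {L : Finset α} {t b : α} (hb : b ∈ L) (htb : t < b) :
    nextAbove L t ∈ L ∧ t < nextAbove L t ∧ ∀ s ∈ L, t < s → nextAbove L t ≤ s := by
  have hne : (L.filter (t < ·)).Nonempty := ⟨b, Finset.mem_filter.mpr ⟨hb, htb⟩⟩
  have hmem := Finset.mem_filter.mp (Finset.min'_mem _ hne)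
  rw [nextAbove, dif_pos hne]
  exact ⟨hmem.1, hmem.2, fun s hs hts =>
    Finset.min'_le _ _ (Finset.mem_filter.mpr ⟨hs, hts⟩)⟩

lemma sum_filter_nextAbove_sub [AddCommGroup α] {L : Finset α} {a b : α} (ha : a ∈ L)
    (hb : b ∈ L) (hab : a ≤ b) :
    ∑ t ∈ L.filter (· ∈ Set.Ico a b), (nextAbove L t - t) = b - a := by
  induction hn : (L.filter (· ∈ Set.Ico a b)).card using Nat.strong_induction_on
    generalizing a with
  | _ n ih =>
  rcases hab.eq_or_lt with rfl | hlt
  · rw [Finset.filter_false_of_mem (fun t _ h => h.1.not_gt h.2), Finset.sum_empty, sub_self]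
  obtain ⟨ha'L, haa', ha'min⟩ := nextAbove_spec hb hlt
  have hsplit : L.filter (· ∈ Set.Ico a b)
      = insert a (L.filter (· ∈ Set.Ico (nextAbove L a) b)) := by
    ext t
    simp only [Finset.mem_filter, Finset.mem_insert, Set.mem_Ico]
    constructor
    · rintro ⟨htL, hat, htb⟩
      rcases hat.eq_or_lt with rfl | hat
      exacts [Or.inl rfl, Or.inr ⟨htL, ha'min t htL hat, htb⟩]
    · rintro (rfl | ⟨htL, h1, h2⟩)
      exacts [⟨ha, le_rfl, hlt⟩, ⟨htL, haa'.le.trans h1, h2⟩]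
  have hnot : a ∉ L.filter (· ∈ Set.Ico (nextAbove L a) b) :=
    fun h => haa'.not_ge (Finset.mem_filter.mp h).2.1
  have hcard : (L.filter (· ∈ Set.Ico (nextAbove L a) b)).card < n := by
    rw [← hn, hsplit, Finset.card_insert_of_notMem hnot]; omega
  rw [hsplit, Finset.sum_insert hnot, ih _ hcard ha'L (ha'min b hb hlt) rfl]
  abel

end Telescoping

lemma Set.exists_subset_ncard_eq_image_eq {α β : Type*} (f : α → β) {s : Set α} {k : ℕ}
    (hk : (f '' s).ncard ≤ k) (hks : k ≤ s.ncard) :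
    ∃ s' ⊆ s, s'.ncard = k ∧ f '' s' = f '' s := by
  obtain ⟨s₀, hs₀, hbij⟩ := Set.exists_subset_bijOn s f
  obtain ⟨s', hs₀s', hs's, hcard⟩ :=
    Set.exists_subsuperset_card_eq hs₀ (hbij.ncard_eq ▸ hk) hks
  exact ⟨s', hs's, hcard,
    (Set.image_mono hs's).antisymm (hbij.image_eq ▸ Set.image_mono hs₀s')⟩

namespace PhyloTree

variable {V : Type} [Fintype V] [DecidableEq V] (T : PhyloTree V)

lemma anc_trans {u v w : V} (h₁ : T.anc u v) (h₂ : T.anc v w) : T.anc u w := h₂.trans h₁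

lemma anc_of_parent {u p : V} (h : T.parent u = some p) : T.anc p u :=
  Relation.ReflTransGen.single h

lemma anc_root (v : V) : T.anc T.root v := T.reaches_root v

lemma ne_root_of_parent {v p : V} (h : T.parent v = some p) : v ≠ T.root := by
  rintro rfl; simp [T.parent_root] at h

lemma exists_parent {v : V} (hv : v ≠ T.root) : ∃ p, T.parent v = some p :=
  Option.isSome_iff_exists.mp (T.parent_isSome v hv)

lemma hgt_lt_of_parent {v p : V} (h : T.parent v = some p) : T.hgt p < T.hgt v := by
  linarith [T.hgt_eq v p h, T.len_pos v (T.ne_root_of_parent h)]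

lemma hgt_le_of_anc {u v : V} (h : T.anc u v) : T.hgt u ≤ T.hgt v := by
  induction h with
  | refl => exact le_rfl
  | tail _ hbc ih => exact (T.hgt_lt_of_parent hbc).le.trans ih

lemma hgt_lt_of_anc {u v : V} (h : T.anc u v) (hne : u ≠ v) : T.hgt u < T.hgt v := by
  rcases Relation.ReflTransGen.cases_head h with rfl | ⟨p, hvp, hpu⟩
  exacts [absurd rfl hne, (T.hgt_le_of_anc hpu).trans_lt (T.hgt_lt_of_parent hvp)]

lemma hgt_nonneg (v : V) : 0 ≤ T.hgt v := T.hgt_root ▸ T.hgt_le_of_anc (T.anc_root v)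

lemma len_le_hgt {v : V} (hv : v ≠ T.root) : T.len v ≤ T.hgt v := by
  obtain ⟨p, hp⟩ := T.exists_parent hv
  linarith [T.hgt_eq v p hp, T.hgt_nonneg p]

lemma anc_antisymm {u v : V} (h₁ : T.anc u v) (h₂ : T.anc v u) : u = v := by
  by_contra huv
  exact (T.hgt_lt_of_anc h₁ huv).not_ge (T.hgt_le_of_anc h₂)

lemma anc_of_anc_of_parent {u v p : V} (h : T.anc u v) (hne : u ≠ v)
    (hp : T.parent v = some p) : T.anc u p := by
  rcases Relation.ReflTransGen.cases_head h with rfl | ⟨w, hvw, hwu⟩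
  · exact absurd rfl hne
  · rwa [Option.some.inj (hp.symm.trans hvw)]

lemma anc_total_of_anc {u w x : V} (hu : T.anc u x) (hw : T.anc w x) :
    T.anc u w ∨ T.anc w u := by
  induction hu using Relation.ReflTransGen.head_induction_on with
  | refl => exact Or.inr hw
  | head hxy hyu ih =>
    rcases Relation.ReflTransGen.cases_head hw with rfl | ⟨y', hxy', hy'w⟩
    · exact Or.inl (Relation.ReflTransGen.head hxy hyu)
    · exact ih (Option.some.inj (hxy'.symm.trans hxy) ▸ hy'w)

lemma exists_leaf_anc (v : V) : ∃ x, T.IsLeaf x ∧ T.anc v x := by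
  obtain ⟨x, hvx, hmax⟩ := Set.exists_max_image {w | T.anc v w} T.hgt (Set.toFinite _)
    ⟨v, Relation.ReflTransGen.refl⟩
  refine ⟨x, fun u hu => ?_, hvx⟩
  exact (T.hgt_lt_of_parent hu).not_ge (hmax u (T.anc_trans hvx (T.anc_of_parent hu)))

lemma reflTransGen_adjIn_symm {S : Set V} {u v : V}
    (h : Relation.ReflTransGen (T.adjIn S) u v) : Relation.ReflTransGen (T.adjIn S) v u := by
  induction h with
  | refl => exact Relation.ReflTransGen.refl
  | tail _ hvw ih => exact ih.head ⟨hvw.2.1, hvw.1, hvw.2.2.symm⟩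

/-- The maximal vertices of `T[R d]`, i.e. the roots of its components. -/
def compRoots (d : ℝ) : Set V := {m | m ∈ T.R d ∧ ∀ p, T.parent m = some p → p ∉ T.R d}

/-- The root of the component of `T[R d]` containing `v` (junk value `v` when `v ∉ R d`). -/
def compRoot (d : ℝ) (v : V) : V :=
  if h : ∃ m, T.anc m v ∧ m ∈ T.compRoots d then h.choose else v

/-- The number of components of `T[R d]` that contain a vertex of `Y`. -/
def meetCount (d : ℝ) (Y : Set V) : ℕ := (T.compRoot d '' Y).ncard

lemma exists_anc_mem_compRoots {v : V} {d : ℝ} (hv : v ∈ T.R d) :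
    ∃ m, T.anc m v ∧ m ∈ T.compRoots d := by
  obtain ⟨m, ⟨hmv, hmR⟩, hmin⟩ := Set.exists_min_image {u | T.anc u v ∧ u ∈ T.R d} T.hgt
    (Set.toFinite _) ⟨v, Relation.ReflTransGen.refl, hv⟩
  refine ⟨m, hmv, hmR, fun p hp hpR => ?_⟩
  exact (T.hgt_lt_of_parent hp).not_ge (hmin p ⟨T.anc_trans (T.anc_of_parent hp) hmv, hpR⟩)

lemma compRoot_spec {v : V} {d : ℝ} (hv : v ∈ T.R d) :
    T.anc (T.compRoot d v) v ∧ T.compRoot d v ∈ T.compRoots d := by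
  have h := T.exists_anc_mem_compRoots hv
  rw [compRoot, dif_pos h]
  exact h.choose_spec

lemma image_compRoot_subset {Y : Set V} {d : ℝ} (hY : Y ⊆ T.R d) :
    T.compRoot d '' Y ⊆ T.compRoots d := by
  rintro _ ⟨y, hy, rfl⟩
  exact (T.compRoot_spec (hY hy)).2

lemma meetCount_le_ncard (d : ℝ) (Y : Set V) : T.meetCount d Y ≤ Y.ncard :=
  Set.ncard_image_le (Set.toFinite _)

/-- When all leaves have height `H`, `R d` changes only as `d` crosses one of these values. -/
def depths (H : ℝ) : Finset ℝ := Finset.univ.image (fun v => H - T.hgt v)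

lemma mem_depths (H : ℝ) (v : V) : H - T.hgt v ∈ T.depths H :=
  Finset.mem_image_of_mem _ (Finset.mem_univ v)

lemma H_mem_depths (H : ℝ) : H ∈ T.depths H := by
  simpa [T.hgt_root] using T.mem_depths H T.root

lemma nextAbove_depths_sub_pos {H t : ℝ} (ht : t ∈ (T.depths H).filter (· < H)) :
    0 < nextAbove (T.depths H) t - t :=
  sub_pos.mpr (nextAbove_spec (T.H_mem_depths H) (Finset.mem_filter.mp ht).2).2.1

lemma len_eq_sum_depths (H : ℝ) {v : V} (hv : v ≠ T.root) :
    T.len v = ∑ t ∈ (T.depths H).filter (· ∈ Set.Ico (H - T.hgt v) (H - T.hgt v + T.len v)),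
      (nextAbove (T.depths H) t - t) := by
  obtain ⟨p, hp⟩ := T.exists_parent hv
  have hpv : H - T.hgt v + T.len v = H - T.hgt p := by linarith [T.hgt_eq v p hp]
  rw [sum_filter_nextAbove_sub (T.mem_depths H v) (hpv ▸ T.mem_depths H p)
    (by linarith [T.len_pos v hv])]
  ring

lemma branchDist_le {j : ℕ} {t : ℝ} (ht : 0 ≤ t) (hc : T.ccount t = j) :
    T.branchDist j ≤ t :=
  csInf_le ⟨0, fun _ hd => hd.1⟩ ⟨ht, hc⟩

/-- The condition of the theorem in counting form: for `|A| = k`, meeting `k` components of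
`T[R(d_{k⁺})]` means meeting none of them twice. -/
def IsBalanced (k : ℕ) (A : Set V) : Prop :=
  T.meetCount (T.branchDist (T.kminus k)) A = T.ccount (T.branchDist (T.kminus k)) ∧
    T.meetCount (T.branchDist (T.kplus k)) A = k

section Ultrametric

variable {H : ℝ} (hH : ∀ x, T.IsLeaf x → T.hgt x = H)
include hH

lemma hgt_le (v : V) : T.hgt v ≤ H := by
  obtain ⟨x, hx, hvx⟩ := T.exists_leaf_anc v
  exact hH x hx ▸ T.hgt_le_of_anc hvx

lemma mem_R_iff {v : V} {d : ℝ} : v ∈ T.R d ↔ H - T.hgt v ≤ d := by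
  constructor
  · rintro ⟨x, hx, -, hle⟩
    rwa [hH x hx] at hle
  · intro hle
    obtain ⟨x, hx, hvx⟩ := T.exists_leaf_anc v
    exact ⟨x, hx, hvx, by rwa [hH x hx]⟩

lemma R_mono {d e : ℝ} (hde : d ≤ e) : T.R d ⊆ T.R e := fun v hv => by
  rw [T.mem_R_iff hH] at hv ⊢; linarith

lemma leaves_subset_R {d : ℝ} (hd : 0 ≤ d) : T.leaves ⊆ T.R d := fun x hx => by
  rw [T.mem_R_iff hH, hH x hx, sub_self]; exact hd

lemma mem_R_of_anc {v w : V} {d : ℝ} (hv : v ∈ T.R d) (hvw : T.anc v w) : w ∈ T.R d := by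
  rw [T.mem_R_iff hH] at hv ⊢; linarith [T.hgt_le_of_anc hvw]

lemma eq_of_anc_of_mem_compRoots {m m' v : V} {d : ℝ} (hm : m ∈ T.compRoots d)
    (hm' : m' ∈ T.compRoots d) (hmv : T.anc m v) (hm'v : T.anc m' v) : m = m' := by
  wlog h : T.anc m m' generalizing m m'
  · exact (this hm' hm hm'v hmv ((T.anc_total_of_anc hmv hm'v).resolve_left h)).symm
  by_contra hne
  have hm'root : m' ≠ T.root := by
    rintro rfl; exact hne (T.anc_antisymm h (T.anc_root m))
  obtain ⟨p, hp⟩ := T.exists_parent hm'root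
  exact hm'.2 p hp (T.mem_R_of_anc hH hm.1 (T.anc_of_anc_of_parent h hne hp))

lemma compRoot_eq {m v : V} {d : ℝ} (hm : m ∈ T.compRoots d) (hmv : T.anc m v) :
    T.compRoot d v = m :=
  have hv := T.compRoot_spec (T.mem_R_of_anc hH hm.1 hmv)
  T.eq_of_anc_of_mem_compRoots hH hv.2 hm hv.1 hmv

lemma compRoot_compRoot {v : V} {d e : ℝ} (hde : d ≤ e) (hv : v ∈ T.R d) :
    T.compRoot e (T.compRoot d v) = T.compRoot e v := by
  have hd := T.compRoot_spec hv
  have he := T.compRoot_spec (T.R_mono hH hde hd.2.1)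
  exact (T.compRoot_eq hH he.2 (T.anc_trans he.1 hd.1)).symm

lemma reflTransGen_adjIn_of_anc {u v : V} {d : ℝ} (hu : u ∈ T.R d) (huv : T.anc u v) :
    Relation.ReflTransGen (T.adjIn (T.R d)) u v := by
  induction huv using Relation.ReflTransGen.head_induction_on with
  | refl => exact Relation.ReflTransGen.refl
  | head hvw hwu ih =>
    have hw := T.mem_R_of_anc hH hu hwu
    exact ih.tail ⟨hw, T.mem_R_of_anc hH hw (T.anc_of_parent hvw), Or.inr hvw⟩

lemma component_eq {v : V} {d : ℝ} (hv : v ∈ T.R d) :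
    T.R d ∩ {u | Relation.ReflTransGen (T.adjIn (T.R d)) v u} =
      {u | T.anc (T.compRoot d v) u} := by
  obtain ⟨hmv, hm⟩ := T.compRoot_spec hv
  ext u
  constructor
  · rintro ⟨-, hvu⟩
    induction hvu with
    | refl => exact hmv
    | @tail w u _ hwu ih =>
      rcases hwu with ⟨-, huR, hwu | huw⟩
      · by_cases hmw : T.compRoot d v = w
        · exact absurd huR (hm.2 u (hmw ▸ hwu))
        · exact T.anc_of_anc_of_parent ih hmw hwu
      · exact T.anc_trans ih (T.anc_of_parent huw)
  · intro hmu
    have hvm := T.reflTransGen_adjIn_symm (T.reflTransGen_adjIn_of_anc hH hm.1 hmv)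
    exact ⟨T.mem_R_of_anc hH hm.1 hmu, hvm.trans (T.reflTransGen_adjIn_of_anc hH hm.1 hmu)⟩

lemma components_eq (d : ℝ) :
    T.components (T.R d) = (fun m => {u | T.anc m u}) '' T.compRoots d := by
  ext C
  constructor
  · rintro ⟨v, hv, rfl⟩
    exact ⟨T.compRoot d v, (T.compRoot_spec hv).2, (T.component_eq hH hv).symm⟩
  · rintro ⟨m, hm, rfl⟩
    refine ⟨m, hm.1, ?_⟩
    rw [T.component_eq hH hm.1, T.compRoot_eq hH hm Relation.ReflTransGen.refl]

lemma ccount_eq (d : ℝ) : T.ccount d = (T.compRoots d).ncard := by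
  rw [ccount, T.components_eq hH]
  refine Set.InjOn.ncard_image fun a _ b _ hab => ?_
  have hb : T.anc a b := (Set.ext_iff.mp hab b).mpr Relation.ReflTransGen.refl
  have ha : T.anc b a := (Set.ext_iff.mp hab a).mp Relation.ReflTransGen.refl
  exact T.anc_antisymm hb ha

lemma compRoots_zero : T.compRoots 0 = T.leaves := by
  ext v
  constructor
  · rintro ⟨hvR, -⟩ u hu
    have hH_le : H ≤ T.hgt v := by rw [T.mem_R_iff hH] at hvR; linarith
    exact (T.hgt_lt_of_parent hu).not_ge (hH_le.trans' (T.hgt_le hH u))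
  · intro hv
    refine ⟨T.leaves_subset_R hH le_rfl hv, fun p hp hpR => ?_⟩
    rw [T.mem_R_iff hH] at hpR
    linarith [T.hgt_lt_of_parent hp, hH v hv]

lemma compRoots_of_le {d : ℝ} (hd : H ≤ d) : T.compRoots d = {T.root} := by
  ext v
  rw [Set.mem_singleton_iff]
  constructor
  · rintro ⟨-, hmax⟩
    by_contra hv
    obtain ⟨p, hp⟩ := T.exists_parent hv
    exact hmax p hp ((T.mem_R_iff hH).mpr (by linarith [T.hgt_nonneg p]))
  · rintro rfl
    refine ⟨(T.mem_R_iff hH).mpr (by rw [T.hgt_root]; linarith), fun p hp => ?_⟩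
    simp [T.parent_root] at hp

lemma ccount_of_le {d : ℝ} (hd : H ≤ d) : T.ccount d = 1 := by
  rw [T.ccount_eq hH, T.compRoots_of_le hH hd, Set.ncard_singleton]

lemma ccount_zero : T.ccount 0 = T.leaves.ncard := by
  rw [T.ccount_eq hH, T.compRoots_zero hH]

lemma image_compRoot_image {Y : Set V} {d e : ℝ} (hY : Y ⊆ T.R d) (hde : d ≤ e) :
    T.compRoot e '' (T.compRoot d '' Y) = T.compRoot e '' Y := by
  rw [Set.image_image]
  exact Set.image_congr fun y hy => T.compRoot_compRoot hH hde (hY hy)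

lemma image_compRoot_leaves {d : ℝ} (hd : 0 ≤ d) :
    T.compRoot d '' T.leaves = T.compRoots d := by
  refine (T.image_compRoot_subset (T.leaves_subset_R hH hd)).antisymm fun m hm => ?_
  obtain ⟨x, hx, hmx⟩ := T.exists_leaf_anc m
  exact ⟨x, hx, T.compRoot_eq hH hm hmx⟩

lemma image_compRoot_compRoots {d e : ℝ} (hd : 0 ≤ d) (hde : d ≤ e) :
    T.compRoot e '' T.compRoots d = T.compRoots e := by
  rw [← T.image_compRoot_leaves hH hd, T.image_compRoot_image hH (T.leaves_subset_R hH hd) hde,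
    T.image_compRoot_leaves hH (hd.trans hde)]

lemma ccount_antitone {d e : ℝ} (hd : 0 ≤ d) (hde : d ≤ e) : T.ccount e ≤ T.ccount d := by
  rw [T.ccount_eq hH, T.ccount_eq hH, ← T.image_compRoot_compRoots hH hd hde]
  exact Set.ncard_image_le (Set.toFinite _)

lemma meetCount_le_ccount {Y : Set V} (hY : Y ⊆ T.leaves) {d : ℝ} (hd : 0 ≤ d) :
    T.meetCount d Y ≤ T.ccount d := by
  rw [T.ccount_eq hH]
  exact Set.ncard_le_ncard (T.image_compRoot_subset (hY.trans (T.leaves_subset_R hH hd)))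

lemma meetCount_le_min {Y : Set V} (hY : Y ⊆ T.leaves) {k : ℕ} (hYcard : Y.ncard = k) {t : ℝ}
    (ht : 0 ≤ t) : T.meetCount t Y ≤ min k (T.ccount t) :=
  le_min (hYcard ▸ T.meetCount_le_ncard t Y) (T.meetCount_le_ccount hH hY ht)

lemma meetCount_antitone {Y : Set V} (hY : Y ⊆ T.leaves) {d e : ℝ} (hd : 0 ≤ d)
    (hde : d ≤ e) : T.meetCount e Y ≤ T.meetCount d Y := by
  rw [meetCount, meetCount, ← T.image_compRoot_image hH (hY.trans (T.leaves_subset_R hH hd)) hde]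
  exact Set.ncard_image_le (Set.toFinite _)

lemma meetCount_eq_ccount_of_le {Y : Set V} (hY : Y ⊆ T.leaves) {d e : ℝ} (hd : 0 ≤ d)
    (hde : d ≤ e) (hY_d : T.meetCount d Y = T.ccount d) : T.meetCount e Y = T.ccount e := by
  have hYR := hY.trans (T.leaves_subset_R hH hd)
  have hall : T.compRoot d '' Y = T.compRoots d :=
    Set.eq_of_subset_of_ncard_le (T.image_compRoot_subset hYR)
      (by rw [← T.ccount_eq hH, ← hY_d, meetCount])
  rw [meetCount, ← T.image_compRoot_image hH hYR hde, hall,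
    T.image_compRoot_compRoots hH hd hde, T.ccount_eq hH]

lemma meetCount_eq_of_ccount_eq {Y : Set V} (hY : Y ⊆ T.leaves) {d e : ℝ} (hd : 0 ≤ d)
    (hde : d ≤ e) (hc : T.ccount e = T.ccount d) : T.meetCount e Y = T.meetCount d Y := by
  have hinj : Set.InjOn (T.compRoot e) (T.compRoots d) :=
    Set.injOn_of_ncard_image_eq (by
      rw [T.image_compRoot_compRoots hH hd hde, ← T.ccount_eq hH, ← T.ccount_eq hH, hc])
  have hYR := hY.trans (T.leaves_subset_R hH hd)
  rw [meetCount, ← T.image_compRoot_image hH hYR hde,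
    (hinj.mono (T.image_compRoot_subset hYR)).ncard_image, meetCount]

lemma forall_components_inter_nonempty_iff {A : Set V} (hA : A ⊆ T.leaves) {d : ℝ}
    (hd : 0 ≤ d) : (∀ C ∈ T.components (T.R d), (A ∩ C).Nonempty) ↔
      T.meetCount d A = T.ccount d := by
  have hAR := hA.trans (T.leaves_subset_R hH hd)
  rw [T.components_eq hH, Set.forall_mem_image, T.ccount_eq hH, meetCount]
  constructor
  · intro h
    refine congrArg Set.ncard ((T.image_compRoot_subset hAR).antisymm fun m hm => ?_)
    obtain ⟨a, ha, hma⟩ := h hm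
    exact ⟨a, ha, T.compRoot_eq hH hm hma⟩
  · intro h m hm
    obtain ⟨a, ha, rfl⟩ := (Set.eq_of_subset_of_ncard_le (T.image_compRoot_subset hAR)
      h.ge).symm ▸ hm
    exact ⟨a, ha, (T.compRoot_spec (hAR ha)).1⟩

lemma forall_components_inter_subsingleton_iff {A : Set V} (hA : A ⊆ T.leaves) {d : ℝ}
    (hd : 0 ≤ d) : (∀ C ∈ T.components (T.R d), (A ∩ C).Subsingleton) ↔
      T.meetCount d A = A.ncard := by
  rw [T.components_eq hH, Set.forall_mem_image, meetCount, Set.ncard_image_iff (Set.toFinite _)]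
  constructor
  · intro h a ha b hb hab
    have hspec a (ha : a ∈ A) := T.compRoot_spec (T.leaves_subset_R hH hd (hA ha))
    exact h (hspec a ha).2 ⟨ha, (hspec a ha).1⟩ ⟨hb, hab ▸ (hspec b hb).1⟩
  · rintro h m hm a ⟨ha, hma⟩ b ⟨hb, hmb⟩
    exact h ha hb ((T.compRoot_eq hH hm hma).trans (T.compRoot_eq hH hm hmb).symm)

lemma nonneg_of_mem_depths {t : ℝ} (ht : t ∈ T.depths H) : 0 ≤ t := by
  obtain ⟨v, -, rfl⟩ := Finset.mem_image.mp ht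
  linarith [T.hgt_le hH v]

lemma H_nonneg : 0 ≤ H := by
  obtain ⟨x, hx, -⟩ := T.exists_leaf_anc T.root
  exact hH x hx ▸ T.hgt_nonneg x

lemma exists_mem_depths_R_eq {d : ℝ} (hd : 0 ≤ d) :
    ∃ t ∈ T.depths H, t ≤ d ∧ T.R t = T.R d := by
  obtain ⟨x, hx, -⟩ := T.exists_leaf_anc T.root
  have hne : ((T.depths H).filter (· ≤ d)).Nonempty :=
    ⟨H - T.hgt x, Finset.mem_filter.mpr ⟨T.mem_depths H x, by rwa [hH x hx, sub_self]⟩⟩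
  obtain ⟨htD, htd⟩ := Finset.mem_filter.mp (Finset.max'_mem _ hne)
  refine ⟨_, htD, htd, (T.R_mono hH htd).antisymm fun v hv => ?_⟩
  rw [T.mem_R_iff hH] at hv ⊢
  exact Finset.le_max' _ _ (Finset.mem_filter.mpr ⟨T.mem_depths H v, hv⟩)

lemma branchDist_spec {j : ℕ} (hj : T.IsBranchingValue j) :
    T.branchDist j ∈ T.depths H ∧ T.ccount (T.branchDist j) = j := by
  have hlower {d : ℝ} (hd : 0 ≤ d) (hdj : T.ccount d = j) :
      ∃ t ∈ (T.depths H).filter (fun t => T.ccount t = j), t ≤ d := by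
    obtain ⟨t, htD, htd, hR⟩ := T.exists_mem_depths_R_eq hH hd
    exact ⟨t, Finset.mem_filter.mpr ⟨htD, by rwa [ccount, hR]⟩, htd⟩
  obtain ⟨d, hd, hdj⟩ := hj
  obtain ⟨t, ht, -⟩ := hlower hd hdj
  have hne : ((T.depths H).filter (fun t => T.ccount t = j)).Nonempty := ⟨t, ht⟩
  obtain ⟨hminD, hminj⟩ := Finset.mem_filter.mp (Finset.min'_mem _ hne)
  have hleast : IsLeast {d | 0 ≤ d ∧ T.ccount d = j} (Finset.min' _ hne) := by
    refine ⟨⟨T.nonneg_of_mem_depths hH hminD, hminj⟩, fun d ⟨hd, hdj⟩ => ?_⟩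
    obtain ⟨t, ht, htd⟩ := hlower hd hdj
    exact (Finset.min'_le _ t ht).trans htd
  rw [branchDist, hleast.csInf_eq]
  exact ⟨hminD, hminj⟩

lemma branchDist_nonneg {j : ℕ} (hj : T.IsBranchingValue j) : 0 ≤ T.branchDist j :=
  T.nonneg_of_mem_depths hH (T.branchDist_spec hH hj).1

lemma isBranchingValue_one : T.IsBranchingValue 1 :=
  ⟨H, T.H_nonneg hH, T.ccount_of_le hH le_rfl⟩

lemma isBranchingValue_ncard_leaves : T.IsBranchingValue T.leaves.ncard :=
  ⟨0, le_rfl, T.ccount_zero hH⟩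

lemma kminus_spec {k : ℕ} (hk : 1 ≤ k) :
    T.kminus k ≤ k ∧ T.IsBranchingValue (T.kminus k) ∧
      ∀ j ≤ k, T.IsBranchingValue j → j ≤ T.kminus k := by
  have hbdd : BddAbove {j | j ≤ k ∧ T.IsBranchingValue j} := ⟨k, fun _ hj => hj.1⟩
  have hmem := Nat.sSup_mem (s := {j | j ≤ k ∧ T.IsBranchingValue j})
    ⟨1, hk, T.isBranchingValue_one hH⟩ hbdd
  exact ⟨hmem.1, hmem.2, fun j hj hbr => le_csSup hbdd ⟨hj, hbr⟩⟩

lemma kplus_spec {k : ℕ} (hkn : k ≤ T.leaves.ncard) :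
    k ≤ T.kplus k ∧ T.IsBranchingValue (T.kplus k) ∧
      ∀ j, k ≤ j → T.IsBranchingValue j → T.kplus k ≤ j := by
  have hmem := Nat.sInf_mem (s := {j | k ≤ j ∧ T.IsBranchingValue j})
    ⟨_, hkn, T.isBranchingValue_ncard_leaves hH⟩
  exact ⟨hmem.1, hmem.2, fun j hj hbr => Nat.sInf_le ⟨hj, hbr⟩⟩

lemma ccount_branchDist_kminus_le {k : ℕ} (hk : 1 ≤ k) :
    T.ccount (T.branchDist (T.kminus k)) ≤ k := by
  obtain ⟨hle, hbr, -⟩ := T.kminus_spec hH hk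
  rwa [(T.branchDist_spec hH hbr).2]

lemma le_ccount_branchDist_kplus {k : ℕ} (hkn : k ≤ T.leaves.ncard) :
    k ≤ T.ccount (T.branchDist (T.kplus k)) := by
  obtain ⟨hle, hbr, -⟩ := T.kplus_spec hH hkn
  rwa [(T.branchDist_spec hH hbr).2]

lemma lt_ccount_of_lt_branchDist_kminus {k : ℕ} (hk : 1 ≤ k) {t : ℝ} (ht : 0 ≤ t)
    (htm : t < T.branchDist (T.kminus k)) : k < T.ccount t := by
  obtain ⟨-, hbr, hmax⟩ := T.kminus_spec hH hk
  by_contra! hc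
  have hle : T.ccount t ≤ T.kminus k := hmax _ hc ⟨t, ht, rfl⟩
  have hge : T.kminus k ≤ T.ccount t :=
    (T.branchDist_spec hH hbr).2 ▸ T.ccount_antitone hH ht htm.le
  exact htm.not_ge (T.branchDist_le ht (hle.antisymm hge))

lemma ccount_eq_of_mem_Ico {k : ℕ} (hk : 1 ≤ k) (hkn : k ≤ T.leaves.ncard) {t : ℝ}
    (ht : t ∈ Set.Ico (T.branchDist (T.kplus k)) (T.branchDist (T.kminus k))) :
    T.ccount t = T.ccount (T.branchDist (T.kplus k)) := by
  obtain ⟨-, hbr, hmin⟩ := T.kplus_spec hH hkn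
  have hp0 := T.branchDist_nonneg hH hbr
  refine (T.ccount_antitone hH hp0 ht.1).antisymm ?_
  rw [(T.branchDist_spec hH hbr).2]
  exact hmin _ (T.lt_ccount_of_lt_branchDist_kminus hH hk (hp0.trans ht.1) ht.2).le
    ⟨t, hp0.trans ht.1, rfl⟩

lemma branchDist_kplus_le_kminus {k : ℕ} (hk : 1 ≤ k) (hkn : k ≤ T.leaves.ncard) :
    T.branchDist (T.kplus k) ≤ T.branchDist (T.kminus k) := by
  have hm0 := T.branchDist_nonneg hH (T.kminus_spec hH hk).2.1
  have hp := (T.branchDist_spec hH (T.kplus_spec hH hkn).2.1).2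
  by_contra! hlt
  have hc := T.ccount_antitone hH hm0 hlt.le
  have h1 := T.ccount_branchDist_kminus_le hH hk
  have h2 := T.le_ccount_branchDist_kplus hH hkn
  exact hlt.not_ge (T.branchDist_le hm0 (by omega))

lemma meetCount_eq_min_of_isBalanced {k : ℕ} (hk : 1 ≤ k) (hkn : k ≤ T.leaves.ncard)
    {A : Set V} (hA : A ⊆ T.leaves) (hcard : A.ncard = k) (hbal : T.IsBalanced k A) {t : ℝ}
    (ht : 0 ≤ t) : T.meetCount t A = min k (T.ccount t) := by
  obtain ⟨hm, hp⟩ := hbal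
  have hm0 := T.branchDist_nonneg hH (T.kminus_spec hH hk).2.1
  have hp0 := T.branchDist_nonneg hH (T.kplus_spec hH hkn).2.1
  rcases le_or_gt (T.branchDist (T.kminus k)) t with hmt | htm
  · have hct : T.ccount t ≤ k :=
      (T.ccount_antitone hH hm0 hmt).trans (T.ccount_branchDist_kminus_le hH hk)
    rw [T.meetCount_eq_ccount_of_le hH hA hm0 hmt hm, min_eq_right hct]
  rw [min_eq_left (T.lt_ccount_of_lt_branchDist_kminus hH hk ht htm).le]
  rcases le_or_gt t (T.branchDist (T.kplus k)) with htp | hpt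
  · have := T.meetCount_antitone hH hA ht htp
    have := T.meetCount_le_ncard t A
    omega
  · rw [T.meetCount_eq_of_ccount_eq hH hA hp0 hpt.le
      (T.ccount_eq_of_mem_Ico hH hk hkn ⟨hpt.le, htm⟩), hp]

lemma exists_lt_min_of_not_isBalanced {k : ℕ} (hk : 1 ≤ k) (hkn : k ≤ T.leaves.ncard)
    {A : Set V} (hA : A ⊆ T.leaves) (hcard : A.ncard = k) (hbal : ¬ T.IsBalanced k A) :
    ∃ t ∈ (T.depths H).filter (· < H), T.meetCount t A < min k (T.ccount t) := by
  -- from height `H` on there is a single component, and every nonempty `A` meets it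
  have hlt_H {t : ℝ} (hlt : T.meetCount t A < min k (T.ccount t)) : t < H := by
    by_contra! hHt
    have hpos : 0 < T.meetCount t A :=
      (Set.ncard_pos (Set.toFinite _)).mpr ((Set.nonempty_of_ncard_ne_zero (by omega)).image _)
    rw [T.ccount_of_le hH hHt] at hlt
    omega
  obtain ⟨j, hj, hlt⟩ : ∃ j, T.IsBranchingValue j ∧
      T.meetCount (T.branchDist j) A < min k (T.ccount (T.branchDist j)) := by
    rcases not_and_or.mp hbal with hm | hp
    · have hbr := (T.kminus_spec hH hk).2.1
      have := T.meetCount_le_ccount hH hA (T.branchDist_nonneg hH hbr)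
      have := T.ccount_branchDist_kminus_le hH hk
      exact ⟨_, hbr, by omega⟩
    · have := T.meetCount_le_ncard (T.branchDist (T.kplus k)) A
      have := T.le_ccount_branchDist_kplus hH hkn
      exact ⟨_, (T.kplus_spec hH hkn).2.1, by omega⟩
  exact ⟨_, Finset.mem_filter.mpr ⟨(T.branchDist_spec hH hj).1, hlt_H hlt⟩, hlt⟩

lemma exists_leaves_image_compRoot_eq {S : Set V} {d : ℝ} (hS : S ⊆ T.compRoots d) :
    ∃ Y ⊆ T.leaves, Y.ncard = S.ncard ∧ T.compRoot d '' Y = S := by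
  choose β hβ using T.exists_leaf_anc
  have hinv : ∀ m ∈ S, T.compRoot d (β m) = m := fun m hm => T.compRoot_eq hH (hS hm) (hβ m).2
  refine ⟨β '' S, Set.image_subset_iff.mpr fun m _ => (hβ m).1, ?_, ?_⟩
  · exact Set.InjOn.ncard_image fun a ha b hb hab => by rw [← hinv a ha, hab, hinv b hb]
  · rw [Set.image_image, Set.image_congr hinv, Set.image_id']

lemma exists_isBalanced {k : ℕ} (hk : 1 ≤ k) (hkn : k ≤ T.leaves.ncard) :
    ∃ B ⊆ T.leaves, B.ncard = k ∧ T.IsBalanced k B := by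
  have hp0 := T.branchDist_nonneg hH (T.kplus_spec hH hkn).2.1
  have hpm := T.branchDist_kplus_le_kminus hH hk hkn
  have hsurj := T.image_compRoot_compRoots hH hp0 hpm
  obtain ⟨S, hS, hScard, hSimg⟩ := Set.exists_subset_ncard_eq_image_eq (k := k)
    (T.compRoot (T.branchDist (T.kminus k))) (s := T.compRoots (T.branchDist (T.kplus k)))
    (by rw [hsurj, ← T.ccount_eq hH]; exact T.ccount_branchDist_kminus_le hH hk)
    (by rw [← T.ccount_eq hH]; exact T.le_ccount_branchDist_kplus hH hkn)
  obtain ⟨B, hB, hBcard, hBimg⟩ := T.exists_leaves_image_compRoot_eq hH hS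
  refine ⟨B, hB, hBcard.trans hScard, ?_, ?_⟩
  · rw [meetCount, ← T.image_compRoot_image hH (hB.trans (T.leaves_subset_R hH hp0)) hpm, hBimg,
      hSimg, hsurj, T.ccount_eq hH]
  · rw [meetCount, hBimg, hScard]

lemma mem_compRoots_iff_of_ne_root {v : V} (hv : v ≠ T.root) {t : ℝ} :
    v ∈ T.compRoots t ↔ t ∈ Set.Ico (H - T.hgt v) (H - T.hgt v + T.len v) := by
  obtain ⟨p, hp⟩ := T.exists_parent hv
  have hpv : H - T.hgt p = H - T.hgt v + T.len v := by linarith [T.hgt_eq v p hp]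
  simp only [compRoots, Set.mem_ofPred_eq, T.mem_R_iff hH, hp, Option.some.injEq, forall_eq',
    not_le, hpv, Set.mem_Ico]

lemma mem_image_compRoot_iff {Y : Set V} (hY : Y ⊆ T.leaves) {t : ℝ} (ht : 0 ≤ t)
    (htH : t < H) {v : V} :
    v ∈ T.compRoot t '' Y ↔ (v ≠ T.root ∧ ∃ x ∈ Y, T.IsLeaf x ∧ T.anc v x) ∧
      t ∈ Set.Ico (H - T.hgt v) (H - T.hgt v + T.len v) := by
  constructor
  · rintro ⟨y, hy, rfl⟩
    obtain ⟨hanc, hroot⟩ := T.compRoot_spec (T.leaves_subset_R hH ht (hY hy))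
    have hne : T.compRoot t y ≠ T.root := by
      intro h
      have := (T.mem_R_iff hH).mp (h ▸ hroot.1)
      rw [T.hgt_root] at this
      linarith
    exact ⟨⟨hne, y, hy, hY hy, hanc⟩, (T.mem_compRoots_iff_of_ne_root hH hne).mp hroot⟩
  · rintro ⟨⟨hne, x, hx, -, hvx⟩, hcut⟩
    exact ⟨x, hx, T.compRoot_eq hH ((T.mem_compRoots_iff_of_ne_root hH hne).mpr hcut) hvx⟩

lemma PD_eq_sum {Y : Set V} (hY : Y ⊆ T.leaves) :
    T.PD Y = ∑ t ∈ (T.depths H).filter (· < H),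
      (nextAbove (T.depths H) t - t) * T.meetCount t Y := by
  set D := (T.depths H).filter (· < H)
  have hcut {t : ℝ} (ht : t ∈ D) (v : V) := T.mem_image_compRoot_iff hH hY
    (T.nonneg_of_mem_depths hH (Finset.mem_filter.mp ht).1) (Finset.mem_filter.mp ht).2 (v := v)
  have hedge (v : V) :
      (if v ≠ T.root ∧ ∃ x ∈ Y, T.IsLeaf x ∧ T.anc v x then T.len v else 0) =
      ∑ t ∈ D, if v ∈ T.compRoot t '' Y then nextAbove (T.depths H) t - t else 0 := by
    by_cases hE : v ≠ T.root ∧ ∃ x ∈ Y, T.IsLeaf x ∧ T.anc v x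
    · rw [if_pos hE, T.len_eq_sum_depths H hE.1, ← Finset.sum_filter]
      refine Finset.sum_congr (Finset.ext fun t => ?_) fun _ _ => rfl
      simp only [Finset.mem_filter]
      constructor
      · rintro ⟨htD, hc⟩
        have htD' : t ∈ D :=
          Finset.mem_filter.mpr ⟨htD, by linarith [hc.2, T.len_le_hgt hE.1]⟩
        exact ⟨htD', (hcut htD' v).mpr ⟨hE, hc⟩⟩
      · rintro ⟨htD, himg⟩
        exact ⟨(Finset.mem_filter.mp htD).1, ((hcut htD v).mp himg).2⟩
    · rw [if_neg hE]
      exact (Finset.sum_eq_zero fun t ht => if_neg fun h => hE ((hcut ht v).mp h).1).symm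
  rw [PD, Finset.sum_congr rfl fun v _ => hedge v, Finset.sum_comm]
  refine Finset.sum_congr rfl fun t _ => ?_
  rw [← Finset.sum_filter, Finset.sum_const, nsmul_eq_mul, mul_comm, meetCount,
    Set.ncard_eq_toFinset_card']
  congr 3
  ext v
  simp

lemma PD_le_PD_of_isBalanced {k : ℕ} (hk : 1 ≤ k) (hkn : k ≤ T.leaves.ncard) {A : Set V}
    (hA : A ⊆ T.leaves) (hcard : A.ncard = k) (hbal : T.IsBalanced k A) {Y : Set V}
    (hY : Y ⊆ T.leaves) (hYcard : Y.ncard = k) : T.PD Y ≤ T.PD A := by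
  rw [T.PD_eq_sum hH hY, T.PD_eq_sum hH hA]
  refine Finset.sum_le_sum fun t ht => ?_
  have ht0 := T.nonneg_of_mem_depths hH (Finset.mem_filter.mp ht).1
  rw [T.meetCount_eq_min_of_isBalanced hH hk hkn hA hcard hbal ht0]
  exact mul_le_mul_of_nonneg_left (mod_cast T.meetCount_le_min hH hY hYcard ht0)
    (T.nextAbove_depths_sub_pos ht).le

lemma PD_lt_PD_of_not_isBalanced {k : ℕ} (hk : 1 ≤ k) (hkn : k ≤ T.leaves.ncard) {A : Set V}
    (hA : A ⊆ T.leaves) (hcard : A.ncard = k) (hA_bal : ¬ T.IsBalanced k A) {B : Set V}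
    (hB : B ⊆ T.leaves) (hBcard : B.ncard = k) (hB_bal : T.IsBalanced k B) :
    T.PD A < T.PD B := by
  rw [T.PD_eq_sum hH hA, T.PD_eq_sum hH hB]
  have hB_eq {t : ℝ} (ht : t ∈ (T.depths H).filter (· < H)) :=
    T.meetCount_eq_min_of_isBalanced hH hk hkn hB hBcard hB_bal
      (T.nonneg_of_mem_depths hH (Finset.mem_filter.mp ht).1)
  obtain ⟨t₀, ht₀, hlt⟩ := T.exists_lt_min_of_not_isBalanced hH hk hkn hA hcard hA_bal
  refine Finset.sum_lt_sum (fun t ht => ?_) ⟨t₀, ht₀, ?_⟩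
  · rw [hB_eq ht]
    exact mul_le_mul_of_nonneg_left (mod_cast T.meetCount_le_min hH hA hcard
      (T.nonneg_of_mem_depths hH (Finset.mem_filter.mp ht).1)) (T.nextAbove_depths_sub_pos ht).le
  · rw [hB_eq ht₀]
    exact mul_lt_mul_of_pos_left (mod_cast hlt) (T.nextAbove_depths_sub_pos ht₀)

end Ultrametric

end PhyloTree

/-- Theorem 1 of the paper.  For an ultrametric rooted
phylogenetic tree, a set `A` of `k` leaves is a size-`k` maxPD set if and only
if `A` contains at least one leaf from each component of `T[R(d_{k⁻})]` and at
most one leaf from each component of `T[R(d_{k⁺})]`. -/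
theorem isMaxPD_iff_components
    {V : Type} [Fintype V] [DecidableEq V] (T : PhyloTree V)
    (hU : T.Ultrametric) (A : Set V) (hA : A ⊆ T.leaves) (k : ℕ)
    (hcard : A.ncard = k) (hk : 1 ≤ k) (hkn : k ≤ T.leaves.ncard) :
    T.IsMaxPD k A ↔
      (∀ C ∈ T.components (T.R (T.branchDist (T.kminus k))), (A ∩ C).Nonempty) ∧
      (∀ C ∈ T.components (T.R (T.branchDist (T.kplus k))), (A ∩ C).Subsingleton) := by
  obtain ⟨x₀, hx₀, -⟩ := T.exists_leaf_anc T.root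
  have hH : ∀ x, T.IsLeaf x → T.hgt x = T.hgt x₀ := fun x hx => hU x x₀ hx hx₀
  rw [T.forall_components_inter_nonempty_iff hH hA
      (T.branchDist_nonneg hH (T.kminus_spec hH hk).2.1),
    T.forall_components_inter_subsingleton_iff hH hA
      (T.branchDist_nonneg hH (T.kplus_spec hH hkn).2.1), hcard]
  change T.IsMaxPD k A ↔ T.IsBalanced k A
  constructor
  · intro hmax
    by_contra hA_bal
    obtain ⟨B, hB, hBcard, hB_bal⟩ := T.exists_isBalanced hH hk hkn
    exact (hmax.2.2 B hB hBcard).not_gt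
      (T.PD_lt_PD_of_not_isBalanced hH hk hkn hA hcard hA_bal hB hBcard hB_bal)
  · intro hA_bal
    exact ⟨hA, hcard, fun Y hY hYcard =>
      T.PD_le_PD_of_isBalanced hH hk hkn hA hcard hA_bal hY hYcard⟩
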